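/- arXiv:math/0003152 — 2 statements merged into one kernel-verified Lean document; each statement's English description precedes it below -/
import Mathlib

section
/- Let A be a C*-algebra, φ a bounded linear functional on A with polar decomposition φ = u|φ| (where u is a partial isometry in A'' and |φ| is the absolute value of φ), and a an element of the unit ball of A. Then ‖φ − a·|φ|‖ ≤ (2‖φ‖)^{1/2} · |‖φ‖ − φ*(a)|^{1/2}. -/
open scoped ComplexOrder

/-!
`|φ|` is a positive functional, so `(y, z) ↦ |φ|(y* z)` is a semi-inner product and Cauchy–Schwarz
gives `|(φ - a·|φ|)(x)| = ||φ|(x (u - a))| ≤ |φ|(x x*)^{1/2} |φ|((u - a)* (u - a))^{1/2}`.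
The first factor is at most `‖φ‖^{1/2} ‖x‖`. Expanding the second and using `|φ|(a* u) = φ(a*)`
bounds it by `(2 (‖φ‖ - Re φ(a*)))^{1/2} ≤ (2 |‖φ‖ - φ*(a)|)^{1/2}`.
-/

/-- Right translate of a functional: `(a · ψ) x = ψ (x * a)`. -/
noncomputable def rightMulFunctional {A : Type*} [NonUnitalCStarAlgebra A]
    (ψ : A →L[ℂ] ℂ) (a : A) : A →L[ℂ] ℂ :=
  ψ.comp ((ContinuousLinearMap.mul ℂ A).flip a)

lemma map_nonneg_of_star_mul_self_nonneg {R M F : Type*} [NonUnitalSemiring R] [PartialOrder R]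
    [StarRing R] [StarOrderedRing R] [AddCommMonoid M] [PartialOrder M] [IsOrderedAddMonoid M]
    [FunLike F R M] [AddMonoidHomClass F R M] (f : F) (hf : ∀ r, 0 ≤ f (star r * r))
    {x : R} (hx : 0 ≤ x) : 0 ≤ f x := by
  rw [StarOrderedRing.nonneg_iff] at hx
  induction hx using AddSubmonoid.closure_induction with
  | mem _ h => obtain ⟨r, rfl⟩ := h; exact hf r
  | zero => simp
  | add _ _ _ _ hx hy => rw [map_add]; exact add_nonneg hx hy

lemma re_apply_star_mul_self_le {B : Type*} [NonUnitalNormedRing B] [StarRing B] [CStarRing B]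
    (g : B → ℂ) {N : ℝ} (hN : ∀ b, ‖g b‖ ≤ N * ‖b‖) (b : B) :
    (g (star b * b)).re ≤ N * ‖b‖ ^ 2 := by
  calc (g (star b * b)).re ≤ ‖g (star b * b)‖ := Complex.re_le_norm _
    _ ≤ N * ‖b‖ ^ 2 := by rw [sq, ← CStarRing.norm_star_mul_self]; exact hN _

namespace PositiveLinearMap

variable {B : Type*} [NonUnitalCStarAlgebra B] [PartialOrder B] [StarOrderedRing B]
  (f : B →ₚ[ℂ] ℂ)

lemma norm_apply_star_mul_le (y z : B) :
    ‖f (star y * z)‖ ≤ √(f (star y * y)).re * √(f (star z * z)).re :=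
  norm_inner_le_norm (𝕜 := ℂ) (f.toPreGNS y) (f.toPreGNS z)

lemma re_apply_star_sub_mul_sub (y z : B) :
    (f (star (y - z) * (y - z))).re =
      (f (star y * y)).re - 2 * (f (star z * y)).re + (f (star z * z)).re := by
  have hsymm : f (star y * z) = star (f (star z * y)) := by
    rw [← map_star f, star_mul, star_star]
  rw [star_sub, sub_mul, mul_sub, mul_sub, map_sub, map_sub, map_sub, hsymm]
  simp only [Complex.sub_re, Complex.star_def, Complex.conj_re]
  ring

lemma norm_apply_mul_sub_le {N : ℝ} (hN₀ : 0 ≤ N) (hN : ∀ b, ‖f b‖ ≤ N * ‖b‖) {u c : B}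
    (hu : ‖u‖ ≤ 1) (hc : ‖c‖ ≤ 1) (x : B) :
    ‖f (x * (u - c))‖ ≤ √(2 * N) * √(N - (f (star c * u)).re) * ‖x‖ := by
  have hx : (f (star (star x) * star x)).re ≤ N * ‖x‖ ^ 2 := by
    simpa using re_apply_star_mul_self_le f hN (star x)
  have hball : ∀ b : B, ‖b‖ ≤ 1 → (f (star b * b)).re ≤ N := fun b hb ↦ by
    refine (re_apply_star_mul_self_le f hN b).trans (mul_le_of_le_one_right hN₀ ?_)
    exact pow_le_one₀ (norm_nonneg b) hb
  have huc : (f (star (u - c) * (u - c))).re ≤ 2 * (N - (f (star c * u)).re) := by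
    rw [re_apply_star_sub_mul_sub]
    linarith [hball u hu, hball c hc]
  calc ‖f (x * (u - c))‖ = ‖f (star (star x) * (u - c))‖ := by rw [star_star]
    _ ≤ √(N * ‖x‖ ^ 2) * √(2 * (N - (f (star c * u)).re)) :=
      (f.norm_apply_star_mul_le _ _).trans (by gcongr)
    _ = √(2 * N) * √(N - (f (star c * u)).re) * ‖x‖ := by
      rw [Real.sqrt_mul' _ (sq_nonneg _), Real.sqrt_sq (norm_nonneg _),
        Real.sqrt_mul zero_le_two, Real.sqrt_mul zero_le_two]
      ring

end PositiveLinearMap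

/-- The enveloping von Neumann algebra `A''` is modelled by a unital C⋆-algebra `B` into which `A`
embeds isometrically; `Φ` and `absΦ` are the extensions of `φ` and `|φ|` to `B`. -/
theorem norm_sub_rightMul_absValue_le_general
    {A : Type*} [NonUnitalCStarAlgebra A] {B : Type*} [CStarAlgebra B]
    (ι : A →⋆ₙₐ[ℂ] B) (hι : ∀ x, ‖ι x‖ = ‖x‖)
    (φ absφ : A →L[ℂ] ℂ) (Φ absΦ : B →L[ℂ] ℂ) (u : B)
    (hΦ : ∀ x, Φ (ι x) = φ x) (hu1 : ‖u‖ ≤ 1)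
    (habsΦpos : ∀ b : B, 0 ≤ absΦ (star b * b)) (habsΦnorm : ‖absΦ‖ = ‖φ‖)
    (hpolar : ∀ b : B, Φ b = absΦ (b * u))
    (habsφ : ∀ x, absφ x = absΦ (ι x))
    (a : A) (ha : ‖a‖ ≤ 1) :
    ‖φ - rightMulFunctional absφ a‖ ≤
      Real.sqrt (2 * ‖φ‖) *
        Real.sqrt ‖(‖φ‖ : ℂ) - starRingEnd ℂ (φ (star a))‖ := by
  -- `B` carries no order of its own; under the spectral order `absΦ` is a positive linear map.
  let _ := CStarAlgebra.spectralOrder B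
  have := CStarAlgebra.spectralOrderedRing B
  let f : B →ₚ[ℂ] ℂ := .mk₀ absΦ fun _ ↦ map_nonneg_of_star_mul_self_nonneg absΦ habsΦpos
  have hf : ∀ b, ‖f b‖ ≤ ‖φ‖ * ‖b‖ := fun b ↦ habsΦnorm ▸ absΦ.le_opNorm b
  have hpt : ∀ x, (φ - rightMulFunctional absφ a) x = f (ι x * (u - ι a)) := fun x ↦ by
    change φ x - absφ (x * a) = absΦ _
    rw [mul_sub, map_sub, ← hpolar, hΦ, habsφ, map_mul]
  have hstar : f (star (ι a) * u) = φ (star a) := by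
    change absΦ _ = _
    rw [← hpolar, ← map_star, hΦ]
  have hre : ‖φ‖ - (φ (star a)).re ≤ ‖(‖φ‖ : ℂ) - starRingEnd ℂ (φ (star a))‖ := by
    simpa using Complex.re_le_norm ((‖φ‖ : ℂ) - starRingEnd ℂ (φ (star a)))
  refine ContinuousLinearMap.opNorm_le_bound _ (by positivity) fun x ↦ ?_
  calc ‖(φ - rightMulFunctional absφ a) x‖ = ‖f (ι x * (u - ι a))‖ := by rw [hpt]
    _ ≤ √(2 * ‖φ‖) * √(‖φ‖ - (f (star (ι a) * u)).re) * ‖ι x‖ :=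
      f.norm_apply_mul_sub_le (norm_nonneg φ) hf hu1 (by rwa [hι]) _
    _ ≤ _ := by rw [hstar, hι]; gcongr

/-- For a functional `φ` on a C*-algebra `A` with polar decomposition `φ = u |φ|`
(the partial isometry `u` living in the enveloping von Neumann algebra `A''`,
here modelled by a unital C*-algebra `B` in which `A` embeds isometrically and
to which `φ` extends with the same norm), and `a` in the unit ball of `A`:
`‖φ - a·|φ|‖ ≤ (2‖φ‖)^{1/2} |‖φ‖ - φ*(a)|^{1/2}` where `φ*(x) = conj (φ (star x))`. -/
theorem norm_sub_rightMul_absValue_le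
    {A : Type*} [NonUnitalCStarAlgebra A] {B : Type*} [CStarAlgebra B]
    (ι : A →⋆ₙₐ[ℂ] B) (hι : ∀ x, ‖ι x‖ = ‖x‖)
    (φ absφ : A →L[ℂ] ℂ) (Φ absΦ : B →L[ℂ] ℂ) (u : B)
    (hΦ : ∀ x, Φ (ι x) = φ x) (hΦnorm : ‖Φ‖ = ‖φ‖)
    (hu : u * star u * u = u) (hu1 : ‖u‖ ≤ 1)
    (habsΦpos : ∀ b : B, 0 ≤ absΦ (star b * b)) (habsΦnorm : ‖absΦ‖ = ‖φ‖)
    (hpolar : ∀ b : B, Φ b = absΦ (b * u))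
    (habs : ∀ b : B, absΦ b = Φ (b * star u))
    (habsφ : ∀ x, absφ x = absΦ (ι x))
    (a : A) (ha : ‖a‖ ≤ 1) :
    ‖φ - rightMulFunctional absφ a‖ ≤
      Real.sqrt (2 * ‖φ‖) *
        Real.sqrt ‖(‖φ‖ : ℂ) - starRingEnd ℂ (φ (star a))‖ :=
  norm_sub_rightMul_absValue_le_general ι hι φ absφ Φ absΦ u hΦ hu1 habsΦpos habsΦnorm hpolar habsφ
    a ha
end

section
/- Let A be a C*-algebra, φ a bounded linear functional on A, and a an element of the unit ball of A. Then ‖|φ| − a·φ‖ ≤ (2‖φ‖)^{1/2} · |‖φ‖ − φ(a)|^{1/2}, where |φ| is the absolute value of φ from polar decomposition and (a·φ)(x) = φ(xa). -/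
/-!
Put `c = ι a * u`, so that `‖c‖ ≤ 1`, `|Φ| c = φ a` and `(|φ| - a·φ) x = |Φ| (ι x * (1 - c))`.
Cauchy–Schwarz for the positive functional `|Φ|` bounds the latter by
`|Φ| (ι x (ι x)⋆) ^ ½ |Φ| ((1 - c)⋆ (1 - c)) ^ ½`; the first factor is at most `‖φ‖ ‖x‖²`,
and expanding the second one, with `Re |Φ| 1, Re |Φ| (c⋆ c) ≤ ‖φ‖`, gives at most
`2 (‖φ‖ - Re φ a) ≤ 2 |‖φ‖ - φ a|`.
-/

open scoped ComplexOrder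

namespace ContinuousLinearMap

lemma re_apply_star_mul_self_le {E : Type*} [NonUnitalNormedRing E] [StarRing E] [CStarRing E]
    [NormedSpace ℂ E] (ω : E →L[ℂ] ℂ) (b : E) : (ω (star b * b)).re ≤ ‖ω‖ * ‖b‖ ^ 2 :=
  calc (ω (star b * b)).re ≤ ‖ω (star b * b)‖ := Complex.re_le_norm _
    _ ≤ ‖ω‖ * ‖star b * b‖ := ω.le_opNorm _
    _ = ‖ω‖ * ‖b‖ ^ 2 := by rw [CStarRing.norm_star_mul_self, sq]

/- Positivity of a functional is expressed as `0 ≤ ω (star b * b)`; to use Mathlib's positive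
maps and their GNS inner product we equip the algebra with its spectral order. -/
attribute [local instance] CStarAlgebra.spectralOrder CStarAlgebra.spectralOrderedRing

section NonUnital

variable {B : Type*} [NonUnitalCStarAlgebra B] (ω : B →L[ℂ] ℂ)

noncomputable def toPositiveLinearMap (hω : ∀ b, 0 ≤ ω (star b * b)) : B →ₚ[ℂ] ℂ :=
  .mk₀ ω.toLinearMap fun _ hx ↦ by
    obtain ⟨b, rfl⟩ := CStarAlgebra.nonneg_iff_eq_star_mul_self.mp hx
    exact hω b

@[simp]
lemma toPositiveLinearMap_apply (hω : ∀ b, 0 ≤ ω (star b * b)) (x : B) :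
    ω.toPositiveLinearMap hω x = ω x := rfl

lemma norm_apply_star_mul_sq_le (hω : ∀ b, 0 ≤ ω (star b * b)) (p q : B) :
    ‖ω (star p * q)‖ ^ 2 ≤ (ω (star p * p)).re * (ω (star q * q)).re := by
  set f := ω.toPositiveLinearMap hω
  have hp : (ω (star p * p)).re = ‖f.toPreGNS p‖ ^ 2 := by
    rw [← Complex.ofReal_re (_ ^ 2), Complex.ofReal_pow, f.preGNS_norm_sq]; rfl
  have hq : (ω (star q * q)).re = ‖f.toPreGNS q‖ ^ 2 := by
    rw [← Complex.ofReal_re (_ ^ 2), Complex.ofReal_pow, f.preGNS_norm_sq]; rfl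
  rw [hp, hq, ← mul_pow]
  exact pow_le_pow_left₀ (norm_nonneg _)
    (norm_inner_le_norm (𝕜 := ℂ) (f.toPreGNS p) (f.toPreGNS q)) 2

end NonUnital

section Unital

variable {B : Type*} [CStarAlgebra B] {ω : B →L[ℂ] ℂ}

lemma re_apply_star_mul_self_one_sub_le (hω : ∀ b, 0 ≤ ω (star b * b)) {c : B} (hc : ‖c‖ ≤ 1) :
    (ω (star (1 - c) * (1 - c))).re ≤ 2 * ‖(‖ω‖ : ℂ) - ω c‖ := by
  have hexpand : star (1 - c) * (1 - c) = 1 - c - star c + star c * c := by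
    simp only [star_sub, star_one, sub_mul, mul_sub, one_mul, mul_one]; abel
  have hone : (ω 1).re ≤ ‖ω‖ := by
    rcases subsingleton_or_nontrivial B with _ | _
    · simp [Subsingleton.elim (1 : B) 0]
    · simpa using ω.re_apply_star_mul_self_le 1
  have hstar : (ω (star c)).re = (ω c).re := by
    rw [← ω.toPositiveLinearMap_apply hω, map_star]; rfl
  have hcc : (ω (star c * c)).re ≤ ‖ω‖ :=
    (ω.re_apply_star_mul_self_le c).trans
      (mul_le_of_le_one_right (norm_nonneg _) (pow_le_one₀ (norm_nonneg _) hc))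
  have hdist : ‖ω‖ - (ω c).re ≤ ‖(‖ω‖ : ℂ) - ω c‖ := by
    simpa using Complex.re_le_norm ((‖ω‖ : ℂ) - ω c)
  rw [hexpand]
  simp only [map_add, map_sub, Complex.add_re, Complex.sub_re, hstar]
  linarith

lemma norm_apply_mul_one_sub_le (hω : ∀ b, 0 ≤ ω (star b * b)) {c : B} (hc : ‖c‖ ≤ 1) (y : B) :
    ‖ω (y * (1 - c))‖ ≤ √(2 * ‖ω‖) * √‖(‖ω‖ : ℂ) - ω c‖ * ‖y‖ := by
  have hcs : ‖ω (y * (1 - c))‖ ^ 2 ≤ (‖ω‖ * ‖y‖ ^ 2) * (2 * ‖(‖ω‖ : ℂ) - ω c‖) :=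
    calc ‖ω (y * (1 - c))‖ ^ 2
        ≤ (ω (star (star y) * star y)).re * (ω (star (1 - c) * (1 - c))).re := by
          simpa using ω.norm_apply_star_mul_sq_le hω (star y) (1 - c)
      _ ≤ (‖ω‖ * ‖y‖ ^ 2) * (2 * ‖(‖ω‖ : ℂ) - ω c‖) := by
          refine mul_le_mul ?_ (re_apply_star_mul_self_one_sub_le hω hc) ?_ (by positivity)
          · simpa using ω.re_apply_star_mul_self_le (star y)
          · simpa using (Complex.le_def.mp (hω (1 - c))).1
  refine (pow_le_pow_iff_left₀ (norm_nonneg _) (by positivity) two_ne_zero).mp ?_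
  rw [mul_pow, mul_pow, Real.sq_sqrt (by positivity), Real.sq_sqrt (by positivity)]
  linarith

end Unital

end ContinuousLinearMap

theorem norm_absValue_sub_rightMul_le_general
    {A : Type*} [NonUnitalCStarAlgebra A] {B : Type*} [CStarAlgebra B]
    (ι : A →⋆ₙₐ[ℂ] B) (hι : ∀ x, ‖ι x‖ = ‖x‖)
    (φ absφ : A →L[ℂ] ℂ) (Φ absΦ : B →L[ℂ] ℂ) (u : B)
    (hΦ : ∀ x, Φ (ι x) = φ x)
    (hu1 : ‖u‖ ≤ 1)
    (habsΦpos : ∀ b : B, 0 ≤ absΦ (star b * b)) (habsΦnorm : ‖absΦ‖ = ‖φ‖)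
    (hpolar : ∀ b : B, Φ b = absΦ (b * u))
    (habsφ : ∀ x, absφ x = absΦ (ι x))
    (a : A) (ha : ‖a‖ ≤ 1) :
    ‖absφ - rightMulFunctional φ a‖ ≤
      Real.sqrt (2 * ‖φ‖) * Real.sqrt ‖(‖φ‖ : ℂ) - φ a‖ := by
  set c := ι a * u
  have hc : ‖c‖ ≤ 1 :=
    (norm_mul_le _ _).trans (mul_le_one₀ ((hι a).trans_le ha) (norm_nonneg _) hu1)
  have hφa : absΦ c = φ a := by rw [← hpolar, hΦ]
  have happly (x : A) : (absφ - rightMulFunctional φ a) x = absΦ (ι x * (1 - c)) := by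
    rw [mul_sub, mul_one, map_sub, ← mul_assoc, ← hpolar, ← map_mul, hΦ, ← habsφ]
    rfl
  refine ContinuousLinearMap.opNorm_le_bound _ (by positivity) fun x ↦ ?_
  rw [happly, ← hι x, ← habsΦnorm, ← hφa]
  exact absΦ.norm_apply_mul_one_sub_le habsΦpos hc (ι x)

/-- For a functional `φ` on a C*-algebra `A` with polar decomposition `φ = u |φ|`
(the partial isometry `u` living in the enveloping von Neumann algebra `A''`,
modelled by a unital C*-algebra `B` in which `A` embeds isometrically and to which
`φ` extends with the same norm), and `a` in the unit ball of `A`: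
`‖|φ| - a·φ‖ ≤ (2‖φ‖)^{1/2} |‖φ‖ - φ(a)|^{1/2}`. -/
theorem norm_absValue_sub_rightMul_le
    {A : Type*} [NonUnitalCStarAlgebra A] {B : Type*} [CStarAlgebra B]
    (ι : A →⋆ₙₐ[ℂ] B) (hι : ∀ x, ‖ι x‖ = ‖x‖)
    (φ absφ : A →L[ℂ] ℂ) (Φ absΦ : B →L[ℂ] ℂ) (u : B)
    (hΦ : ∀ x, Φ (ι x) = φ x) (hΦnorm : ‖Φ‖ = ‖φ‖)
    (hu : u * star u * u = u) (hu1 : ‖u‖ ≤ 1)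
    (habsΦpos : ∀ b : B, 0 ≤ absΦ (star b * b)) (habsΦnorm : ‖absΦ‖ = ‖φ‖)
    (hpolar : ∀ b : B, Φ b = absΦ (b * u))
    (habs : ∀ b : B, absΦ b = Φ (b * star u))
    (habsφ : ∀ x, absφ x = absΦ (ι x))
    (a : A) (ha : ‖a‖ ≤ 1) :
    ‖absφ - rightMulFunctional φ a‖ ≤
      Real.sqrt (2 * ‖φ‖) * Real.sqrt ‖(‖φ‖ : ℂ) - φ a‖ :=
  norm_absValue_sub_rightMul_le_general ι hι φ absφ Φ absΦ u hΦ hu1 habsΦpos habsΦnorm hpolar habsφ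
    a ha
end
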